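/- Let F = (U,V,W,S) be a factor quadruple and suppose invertible matrices Q1 ∈ GL(r1), Q2 ∈ GL(r2), Q3 ∈ GL(r3) attain the infimum defining dist(F,F⋆). Then the following first-order optimality conditions hold: (U·Q1)ᵀ(U·Q1 − U⋆)·Σ⋆,1² = M1((Q1⁻¹,Q2⁻¹,Q3⁻¹)·S − S⋆)·M1((Q1⁻¹,Q2⁻¹,Q3⁻¹)·S)ᵀ, (V·Q2)ᵀ(V·Q2 − V⋆)·Σ⋆,2² = M2((Q1⁻¹,Q2⁻¹,Q3⁻¹)·S − S⋆)·M2((Q1⁻¹,Q2⁻¹,Q3⁻¹)·S)ᵀ, and (W·Q3)ᵀ(W·Q3 − W⋆)·Σ⋆,3² = M3((Q1⁻¹,Q2⁻¹,Q3⁻¹)·S − S⋆)·M3((Q1⁻¹,Q2⁻¹,Q3⁻¹)·S)ᵀ. -/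

import Mathlib

open Matrix MeasureTheory
open scoped Kronecker Classical BigOperators

namespace ScaledGD

noncomputable section

abbrev Tensor (n1 n2 n3 : ℕ) := Fin n1 → Fin n2 → Fin n3 → ℝ

/-- mode-1 matricization, columns indexed by (i3, i2) to match the Kronecker convention -/
def M1 {n1 n2 n3 : ℕ} (X : Tensor n1 n2 n3) : Matrix (Fin n1) (Fin n3 × Fin n2) ℝ :=
  Matrix.of fun i p => X i p.2 p.1

def M2 {n1 n2 n3 : ℕ} (X : Tensor n1 n2 n3) : Matrix (Fin n2) (Fin n3 × Fin n1) ℝ :=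
  Matrix.of fun i p => X p.2 i p.1

def M3 {n1 n2 n3 : ℕ} (X : Tensor n1 n2 n3) : Matrix (Fin n3) (Fin n2 × Fin n1) ℝ :=
  Matrix.of fun i p => X p.2 p.1 i

/-- Tucker product (A,B,C)·S -/
def tucker {m1 m2 m3 r1 r2 r3 : ℕ}
    (A : Matrix (Fin m1) (Fin r1) ℝ) (B : Matrix (Fin m2) (Fin r2) ℝ)
    (C : Matrix (Fin m3) (Fin r3) ℝ) (S : Tensor r1 r2 r3) : Tensor m1 m2 m3 :=
  fun i1 i2 i3 => ∑ j1, ∑ j2, ∑ j3, A i1 j1 * B i2 j2 * C i3 j3 * S j1 j2 j3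

/-- Frobenius norm of a matrix -/
def frob {m n : Type*} [Fintype m] [Fintype n] (A : Matrix m n ℝ) : ℝ :=
  Real.sqrt (∑ i, ∑ j, (A i j) ^ 2)

/-- Frobenius norm of a tensor -/
def frobT {n1 n2 n3 : ℕ} (X : Tensor n1 n2 n3) : ℝ :=
  Real.sqrt (∑ i1, ∑ i2, ∑ i3, (X i1 i2 i3) ^ 2)

def innerT {n1 n2 n3 : ℕ} (X Y : Tensor n1 n2 n3) : ℝ :=
  ∑ i1, ∑ i2, ∑ i3, X i1 i2 i3 * Y i1 i2 i3

def innerM {m n : Type*} [Fintype m] [Fintype n] (A B : Matrix m n ℝ) : ℝ :=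
  ∑ i, ∑ j, A i j * B i j

def rowNorm {m n : Type*} [Fintype n] (A : Matrix m n ℝ) (i : m) : ℝ :=
  Real.sqrt (∑ j, (A i j) ^ 2)

/-- ‖·‖_{2,∞}: largest ℓ2 norm of the rows -/
def norm2inf {m n : Type*} [Fintype m] [Fintype n] (A : Matrix m n ℝ) : ℝ :=
  ⨆ i, rowNorm A i

def vecNorm {n : Type*} [Fintype n] (x : n → ℝ) : ℝ :=
  Real.sqrt (∑ i, (x i) ^ 2)

/-- spectral norm -/
def opNorm {m n : Type*} [Fintype m] [Fintype n] (A : Matrix m n ℝ) : ℝ :=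
  sSup { c | ∃ x : n → ℝ, vecNorm x ≤ 1 ∧ c = vecNorm (A.mulVec x) }

/-- a factor quadruple -/
structure Quad (n1 n2 n3 r1 r2 r3 : ℕ) where
  U : Matrix (Fin n1) (Fin r1) ℝ
  V : Matrix (Fin n2) (Fin r2) ℝ
  W : Matrix (Fin n3) (Fin r3) ℝ
  S : Tensor r1 r2 r3

variable {n1 n2 n3 r1 r2 r3 : ℕ}

/-- the tensor (U,V,W)·S represented by a quadruple -/
def Quad.X (F : Quad n1 n2 n3 r1 r2 r3) : Tensor n1 n2 n3 := tucker F.U F.V F.W F.S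

def breveU (F : Quad n1 n2 n3 r1 r2 r3) : Matrix (Fin n3 × Fin n2) (Fin r1) ℝ :=
  (F.W ⊗ₖ F.V) * (M1 F.S)ᵀ

def breveV (F : Quad n1 n2 n3 r1 r2 r3) : Matrix (Fin n3 × Fin n1) (Fin r2) ℝ :=
  (F.W ⊗ₖ F.U) * (M2 F.S)ᵀ

def breveW (F : Quad n1 n2 n3 r1 r2 r3) : Matrix (Fin n2 × Fin n1) (Fin r3) ℝ :=
  (F.V ⊗ₖ F.U) * (M3 F.S)ᵀ


/-- a tangent-space style tensor (used in Lemma on tangent concentration) -/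
def tangentT (Fs : Quad n1 n2 n3 r1 r2 r3) (U' : Matrix (Fin n1) (Fin r1) ℝ)
    (V' : Matrix (Fin n2) (Fin r2) ℝ) (W' : Matrix (Fin n3) (Fin r3) ℝ)
    (S1 S2 S3 : Tensor r1 r2 r3) : Tensor n1 n2 n3 :=
  tucker U' Fs.V Fs.W S1 + tucker Fs.U V' Fs.W S2 + tucker Fs.U Fs.V W' S3

/-- squared scaled distance (infimum over invertible alignment matrices) -/
def distSq (σ1 : Fin r1 → ℝ) (σ2 : Fin r2 → ℝ) (σ3 : Fin r3 → ℝ)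
    (F Fs : Quad n1 n2 n3 r1 r2 r3) : ℝ :=
  sInf { d : ℝ | ∃ (Q1 : Matrix (Fin r1) (Fin r1) ℝ) (Q2 : Matrix (Fin r2) (Fin r2) ℝ)
      (Q3 : Matrix (Fin r3) (Fin r3) ℝ), IsUnit Q1.det ∧ IsUnit Q2.det ∧ IsUnit Q3.det ∧
      d = (frob ((F.U * Q1 - Fs.U) * Matrix.diagonal σ1)) ^ 2
        + (frob ((F.V * Q2 - Fs.V) * Matrix.diagonal σ2)) ^ 2
        + (frob ((F.W * Q3 - Fs.W) * Matrix.diagonal σ3)) ^ 2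
        + (frobT (tucker Q1⁻¹ Q2⁻¹ Q3⁻¹ F.S - Fs.S)) ^ 2 }

def dist (σ1 : Fin r1 → ℝ) (σ2 : Fin r2 → ℝ) (σ3 : Fin r3 → ℝ)
    (F Fs : Quad n1 n2 n3 r1 r2 r3) : ℝ :=
  Real.sqrt (distSq σ1 σ2 σ3 F Fs)

def firstVal {r : ℕ} (σ : Fin r → ℝ) : ℝ := if h : 0 < r then σ ⟨0, h⟩ else 0

def lastVal {r : ℕ} (σ : Fin r → ℝ) : ℝ := if h : 0 < r then σ ⟨r - 1, by omega⟩ else 0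

def sigmaMax (σ1 : Fin r1 → ℝ) (σ2 : Fin r2 → ℝ) (σ3 : Fin r3 → ℝ) : ℝ :=
  max (firstVal σ1) (max (firstVal σ2) (firstVal σ3))

def sigmaMin (σ1 : Fin r1 → ℝ) (σ2 : Fin r2 → ℝ) (σ3 : Fin r3 → ℝ) : ℝ :=
  min (lastVal σ1) (min (lastVal σ2) (lastVal σ3))

def kappa (σ1 : Fin r1 → ℝ) (σ2 : Fin r2 → ℝ) (σ3 : Fin r3 → ℝ) : ℝ :=
  sigmaMax σ1 σ2 σ3 / sigmaMin σ1 σ2 σ3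

def nmax (n1 n2 n3 : ℕ) : ℕ := max n1 (max n2 n3)

/-- the ground truth structural assumptions: orthonormal factors, and the core tensor
matricizations have Gram matrix `Σ⋆ₖ²` where the `σk` are positive and decreasing
(i.e. they are the nonzero singular values of `M_k(X⋆)` in decreasing order). -/
def GroundTruth (σ1 : Fin r1 → ℝ) (σ2 : Fin r2 → ℝ) (σ3 : Fin r3 → ℝ)
    (Fs : Quad n1 n2 n3 r1 r2 r3) : Prop :=
  (Fs.U)ᵀ * Fs.U = 1 ∧ (Fs.V)ᵀ * Fs.V = 1 ∧ (Fs.W)ᵀ * Fs.W = 1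
  ∧ M1 Fs.S * (M1 Fs.S)ᵀ = Matrix.diagonal (fun i => (σ1 i) ^ 2)
  ∧ M2 Fs.S * (M2 Fs.S)ᵀ = Matrix.diagonal (fun i => (σ2 i) ^ 2)
  ∧ M3 Fs.S * (M3 Fs.S)ᵀ = Matrix.diagonal (fun i => (σ3 i) ^ 2)
  ∧ (∀ i, 0 < σ1 i) ∧ (∀ i, 0 < σ2 i) ∧ (∀ i, 0 < σ3 i)
  ∧ (∀ i j : Fin r1, i ≤ j → σ1 j ≤ σ1 i)
  ∧ (∀ i j : Fin r2, i ≤ j → σ2 j ≤ σ2 i)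
  ∧ (∀ i j : Fin r3, i ≤ j → σ3 j ≤ σ3 i)

/-- μ-incoherence of the ground truth -/
def Incoherent (μ : ℝ) (Fs : Quad n1 n2 n3 r1 r2 r3) : Prop :=
  (n1 : ℝ) / r1 * (norm2inf Fs.U) ^ 2 ≤ μ
  ∧ (n2 : ℝ) / r2 * (norm2inf Fs.V) ^ 2 ≤ μ
  ∧ (n3 : ℝ) / r3 * (norm2inf Fs.W) ^ 2 ≤ μ

/-- one scaled gradient step driven by the "error" tensor E -/
def gdStep (η : ℝ) (E : Tensor n1 n2 n3) (F : Quad n1 n2 n3 r1 r2 r3) :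
    Quad n1 n2 n3 r1 r2 r3 where
  U := F.U - η • (M1 E * breveU F * ((breveU F)ᵀ * breveU F)⁻¹)
  V := F.V - η • (M2 E * breveV F * ((breveV F)ᵀ * breveV F)⁻¹)
  W := F.W - η • (M3 E * breveW F * ((breveW F)ᵀ * breveW F)⁻¹)
  S := F.S - η • tucker (((F.U)ᵀ * F.U)⁻¹ * (F.U)ᵀ) (((F.V)ᵀ * F.V)⁻¹ * (F.V)ᵀ)
      (((F.W)ᵀ * F.W)⁻¹ * (F.W)ᵀ) E

/-- row rescaling factor `1 ∧ B/x` (with the degenerate case x = 0 giving factor 1) -/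
def scaleFac (B : ℝ) (n : ℕ) (x : ℝ) : ℝ :=
  if Real.sqrt n * x = 0 then 1 else min 1 (B / (Real.sqrt n * x))

/-- the scaled projection P_B -/
def scaledProj (B : ℝ) (F : Quad n1 n2 n3 r1 r2 r3) : Quad n1 n2 n3 r1 r2 r3 where
  U := Matrix.of fun i j => scaleFac B n1 (rowNorm (F.U * (breveU F)ᵀ) i) * F.U i j
  V := Matrix.of fun i j => scaleFac B n2 (rowNorm (F.V * (breveV F)ᵀ) i) * F.V i j
  W := Matrix.of fun i j => scaleFac B n3 (rowNorm (F.W * (breveW F)ᵀ) i) * F.W i j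
  S := F.S

def IncoherenceCond (B : ℝ) (F : Quad n1 n2 n3 r1 r2 r3) : Prop :=
  Real.sqrt n1 * norm2inf (F.U * (breveU F)ᵀ) ≤ B
  ∧ Real.sqrt n2 * norm2inf (F.V * (breveV F)ᵀ) ≤ B
  ∧ Real.sqrt n3 * norm2inf (F.W * (breveW F)ᵀ) ≤ B

/-- P_Ω : keep the observed entries, zero elsewhere -/
def sampleT (ω : Fin n1 × Fin n2 × Fin n3 → Bool) (X : Tensor n1 n2 n3) : Tensor n1 n2 n3 :=
  fun i1 i2 i3 => if ω (i1, i2, i3) then X i1 i2 i3 else 0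

/-- Bernoulli(p) distribution on Bool -/
def bernoulliBool (p : ℝ) : Measure Bool :=
  (Real.toNNReal p) • Measure.dirac true + (Real.toNNReal (1 - p)) • Measure.dirac false

instance (p : ℝ) : IsFiniteMeasure (bernoulliBool p) := by
  unfold bernoulliBool; infer_instance

/-- i.i.d. Bernoulli sampling of the indices -/
def berMeasure (n1 n2 n3 : ℕ) (p : ℝ) : Measure (Fin n1 × Fin n2 × Fin n3 → Bool) :=
  Measure.pi fun _ => bernoulliBool p

/-- zero out the diagonal of a square matrix -/
def offdiag {N : Type*} [DecidableEq N] (G : Matrix N N ℝ) : Matrix N N ℝ :=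
  Matrix.of fun i j => if i = j then 0 else G i j

/-- `U` consists of (some choice of) top-r eigenvectors of the symmetric matrix G:
orthonormal columns which are eigenvectors, such that any eigenvector orthogonal to
all columns of U has eigenvalue no larger than the eigenvalues of the columns. -/
def IsTopEigenvectors {N : Type*} [Fintype N] {r : ℕ} (G : Matrix N N ℝ)
    (U : Matrix N (Fin r) ℝ) : Prop :=
  Uᵀ * U = 1 ∧ ∃ μ : Fin r → ℝ,
    (∀ j, G.mulVec (fun i => U i j) = μ j • (fun i => U i j))
    ∧ ∀ (v : N → ℝ) (lam : ℝ), v ≠ 0 → G.mulVec v = lam • v →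
        (∀ j, ∑ i, v i * U i j = 0) → ∀ j, lam ≤ μ j

/-- spectral initialization (before projection) for tensor completion -/
def SpectralInitTC (p : ℝ) (Y : Tensor n1 n2 n3) (F : Quad n1 n2 n3 r1 r2 r3) : Prop :=
  IsTopEigenvectors (offdiag ((p ^ 2)⁻¹ • (M1 Y * (M1 Y)ᵀ))) F.U
  ∧ IsTopEigenvectors (offdiag ((p ^ 2)⁻¹ • (M2 Y * (M2 Y)ᵀ))) F.V
  ∧ IsTopEigenvectors (offdiag ((p ^ 2)⁻¹ • (M3 Y * (M3 Y)ᵀ))) F.W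
  ∧ F.S = p⁻¹ • tucker (F.U)ᵀ (F.V)ᵀ (F.W)ᵀ Y

/-- HOSVD with multilinear rank (r1,r2,r3) -/
def IsHOSVD (X : Tensor n1 n2 n3) (F : Quad n1 n2 n3 r1 r2 r3) : Prop :=
  IsTopEigenvectors (M1 X * (M1 X)ᵀ) F.U
  ∧ IsTopEigenvectors (M2 X * (M2 X)ᵀ) F.V
  ∧ IsTopEigenvectors (M3 X * (M3 X)ᵀ) F.W
  ∧ F.S = tucker (F.U)ᵀ (F.V)ᵀ (F.W)ᵀ X

/-- the measurement map A -/
def Amap {m : ℕ} (Ad : Fin m → Tensor n1 n2 n3) (X : Tensor n1 n2 n3) : Fin m → ℝ :=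
  fun i => innerT (Ad i) X

/-- the adjoint A* -/
def Aadj {m : ℕ} (Ad : Fin m → Tensor n1 n2 n3) (y : Fin m → ℝ) : Tensor n1 n2 n3 :=
  fun i1 i2 i3 => ∑ i, y i * Ad i i1 i2 i3

/-- Gaussian design: all entries of the m measurement tensors are i.i.d. N(0,1/m) -/
def gaussDesign (m n1 n2 n3 : ℕ) : Measure (Fin m → Tensor n1 n2 n3) :=
  Measure.pi fun _ => Measure.pi fun _ => Measure.pi fun _ => Measure.pi fun _ =>
    ProbabilityTheory.gaussianReal 0 (m : NNReal)⁻¹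

/-- tensor restricted isometry property -/
def TRIP {m : ℕ} (Ad : Fin m → Tensor n1 n2 n3) (r1' r2' r3' : ℕ) (δ : ℝ) : Prop :=
  ∀ X : Tensor n1 n2 n3, (M1 X).rank ≤ r1' → (M2 X).rank ≤ r2' → (M3 X).rank ≤ r3' →
    (1 - δ) * (frobT X) ^ 2 ≤ ∑ i, (innerT (Ad i) X) ^ 2
    ∧ ∑ i, (innerT (Ad i) X) ^ 2 ≤ (1 + δ) * (frobT X) ^ 2

/-- ε-closeness in the aligned sense -/
def alignedClose (σ1 : Fin r1 → ℝ) (σ2 : Fin r2 → ℝ) (σ3 : Fin r3 → ℝ)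
    (F Fs : Quad n1 n2 n3 r1 r2 r3) (ε : ℝ) : Prop :=
  (frob ((F.U - Fs.U) * Matrix.diagonal σ1)) ^ 2
  + (frob ((F.V - Fs.V) * Matrix.diagonal σ2)) ^ 2
  + (frob ((F.W - Fs.W) * Matrix.diagonal σ3)) ^ 2
  + (frobT (F.S - Fs.S)) ^ 2 ≤ ε ^ 2 * (sigmaMin σ1 σ2 σ3) ^ 2

/-- the alignment equations -/
def AlignEqs (σ1 : Fin r1 → ℝ) (σ2 : Fin r2 → ℝ) (σ3 : Fin r3 → ℝ)
    (F Fs : Quad n1 n2 n3 r1 r2 r3) : Prop :=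
  (F.U)ᵀ * (F.U - Fs.U) * (Matrix.diagonal σ1 * Matrix.diagonal σ1)
      = M1 (F.S - Fs.S) * (M1 F.S)ᵀ
  ∧ (F.V)ᵀ * (F.V - Fs.V) * (Matrix.diagonal σ2 * Matrix.diagonal σ2)
      = M2 (F.S - Fs.S) * (M2 F.S)ᵀ
  ∧ (F.W)ᵀ * (F.W - Fs.W) * (Matrix.diagonal σ3 * Matrix.diagonal σ3)
      = M3 (F.S - Fs.S) * (M3 F.S)ᵀ

/-- `(UᵀU)^{-1/2}`: inverse of the positive semidefinite square root of the Gram matrix -/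
def invSqrtGram {m r : ℕ} (U : Matrix (Fin m) (Fin r) ℝ) : Matrix (Fin r) (Fin r) ℝ :=
  if h : (Uᵀ * U).PosSemidef then
    ((h.1.eigenvectorUnitary : Matrix (Fin r) (Fin r) ℝ) *
      Matrix.diagonal ((RCLike.ofReal : ℝ → ℝ) ∘ Real.sqrt ∘ h.1.eigenvalues) *
      (star h.1.eigenvectorUnitary : Matrix (Fin r) (Fin r) ℝ))⁻¹ else 1

end

/-! Perturb one alignment matrix along `t ↦ Q₁ (1 + t A)`, keeping the other two fixed. With
`T = (Q₁⁻¹, Q₂⁻¹, Q₃⁻¹)·S`, the first factor term becomes `(U Q₁ - U⋆) Σ⋆,₁ + t U Q₁ A Σ⋆,₁` and,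
since mode-1 unfolding turns the first Tucker factor into a left multiplication, the core term
becomes `(1 + t A)⁻¹ M₁(T) - M₁(S⋆)`, where `(1 + t A)⁻¹` has derivative `-A` at `t = 0`.
Minimality at `t = 0` makes the derivative `2 tr (Gᵀ A)` vanish for every `A`, where `G` is the
difference of the two sides of the mode-1 identity; `A = G` gives `tr (Gᵀ G) = 0`, i.e. `G = 0`. -/

section FirstOrder

open Filter Topology

theorem trace_transpose_mul_mul_mul {R m p q r : Type*} [CommSemiring R] [Fintype m] [Fintype p]
    [Fintype q] [Fintype r] (X : Matrix m p R) (B : Matrix m r R) (A : Matrix r q R)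
    (C : Matrix q p R) :
    trace (Xᵀ * (B * A * C)) = trace ((Bᵀ * X * Cᵀ)ᵀ * A) :=
  calc trace (Xᵀ * (B * A * C)) = trace ((Xᵀ * B * A) * C) := by simp only [Matrix.mul_assoc]
    _ = trace (C * (Xᵀ * B * A)) := trace_mul_comm _ _
    _ = trace ((Bᵀ * X * Cᵀ)ᵀ * A) := by
      simp only [transpose_mul, transpose_transpose, Matrix.mul_assoc]

variable {m n r k J : Type*} [Fintype m] [Fintype n] [Fintype r] [DecidableEq r] [Fintype k]
  [Fintype J]

theorem frob_sq (A : Matrix m n ℝ) : frob A ^ 2 = ∑ i, ∑ j, A i j ^ 2 :=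
  Real.sq_sqrt (by positivity)

theorem hasDerivAt_frob_sq {g : ℝ → Matrix m n ℝ} {g' : Matrix m n ℝ} {x : ℝ}
    (hg : ∀ i j, HasDerivAt (fun t => g t i j) (g' i j) x) :
    HasDerivAt (fun t => frob (g t) ^ 2) (2 * trace ((g x)ᵀ * g')) x := by
  simp only [frob_sq]
  refine (HasDerivAt.fun_sum fun i _ => HasDerivAt.fun_sum fun j _ => (hg i j).fun_pow 2)
    |>.congr_deriv ?_
  simp only [trace, diag_apply, mul_apply, transpose_apply, Finset.mul_sum]
  rw [Finset.sum_comm]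
  refine Finset.sum_congr rfl fun i _ => Finset.sum_congr rfl fun j _ => ?_
  push_cast
  ring

theorem eventually_isUnit_det_one_add_smul (A : Matrix r r ℝ) :
    ∀ᶠ t : ℝ in 𝓝 0, IsUnit (1 + t • A).det := by
  have hcont : Continuous fun t : ℝ => (1 + t • A).det := by fun_prop
  filter_upwards [hcont.continuousAt.eventually_ne (by simp : (1 + (0 : ℝ) • A).det ≠ 0)]
    with t ht using ht.isUnit

theorem continuousAt_inv_one_add_smul (A : Matrix r r ℝ) :
    ContinuousAt (fun t : ℝ => (1 + t • A)⁻¹) 0 := by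
  refine ContinuousAt.comp (g := Inv.inv) (continuousAt_matrix_inv _ ?_) (by fun_prop)
  simp [Ring.inverse_eq_inv']

theorem hasDerivAt_inv_one_add_smul_apply (A : Matrix r r ℝ) (i j : r) :
    HasDerivAt (fun t : ℝ => (1 + t • A)⁻¹ i j) (-A i j) 0 := by
  rw [hasDerivAt_iff_tendsto_slope]
  have hlim : Tendsto (fun t : ℝ => -(A * (1 + t • A)⁻¹) i j) (𝓝[≠] 0) (𝓝 (-A i j)) := by
    have h : ContinuousAt (fun t : ℝ => -(A * (1 + t • A)⁻¹) i j) 0 :=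
      (continuous_id.matrix_elem i j).continuousAt.comp
        (f := fun t : ℝ => -(A * (1 + t • A)⁻¹))
        ((continuousAt_inv_one_add_smul A).const_mul A).neg
    simpa using h.tendsto.mono_left nhdsWithin_le_nhds
  refine hlim.congr' ?_
  filter_upwards [(eventually_isUnit_det_one_add_smul A).filter_mono nhdsWithin_le_nhds,
    self_mem_nhdsWithin] with t hdet (ht : t ≠ 0)
  have hsub : (1 + t • A)⁻¹ - 1 = -t • (A * (1 + t • A)⁻¹) :=
    calc (1 + t • A)⁻¹ - 1 = (1 - (1 + t • A)) * (1 + t • A)⁻¹ := by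
          rw [sub_mul, one_mul, mul_nonsing_inv _ hdet]
      _ = -t • (A * (1 + t • A)⁻¹) := by rw [sub_add_cancel_left, neg_smul, neg_mul, smul_mul]
  rw [slope_def_field, zero_smul, add_zero, inv_one, sub_zero, ← Matrix.sub_apply, hsub,
    Matrix.smul_apply, smul_eq_mul]
  field_simp

theorem hasDerivAt_gauge_cost (U Us : Matrix m r ℝ) (D : Matrix r k ℝ)
    (T S : Matrix r J ℝ) (A : Matrix r r ℝ) :
    HasDerivAt (fun t : ℝ => frob ((U * (1 + t • A) - Us) * D) ^ 2
        + frob ((1 + t • A)⁻¹ * T - S) ^ 2)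
      (2 * trace ((Uᵀ * (U - Us) * (D * Dᵀ) - (T - S) * Tᵀ)ᵀ * A)) 0 := by
  have hlin : ∀ t : ℝ, (U * (1 + t • A) - Us) * D = (U - Us) * D + t • (U * A * D) := by
    intro t
    simp only [Matrix.mul_add, Matrix.mul_one, Matrix.mul_smul, Matrix.sub_mul, Matrix.add_mul,
      Matrix.smul_mul]
    abel
  have hfactor := hasDerivAt_frob_sq (x := 0) (g' := U * A * D)
    (g := fun t : ℝ => (U - Us) * D + t • (U * A * D)) fun i j => by
      simpa using ((hasDerivAt_id (0 : ℝ)).mul_const ((U * A * D) i j)).const_add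
        (((U - Us) * D) i j)
  have hcore := hasDerivAt_frob_sq (x := 0) (g' := -(A * T))
    (g := fun t : ℝ => (1 + t • A)⁻¹ * T - S) fun i j => by
      simp only [Matrix.sub_apply, mul_apply]
      refine (HasDerivAt.fun_sum fun c _ =>
        (hasDerivAt_inv_one_add_smul_apply A i c).mul_const (T c j)).sub_const _ |>.congr_deriv ?_
      simp [mul_apply]
  simp_rw [hlin]
  refine (hfactor.add hcore).congr_deriv ?_
  have hfactor_trace := trace_transpose_mul_mul_mul ((U - Us) * D) U A D
  have hcore_trace := trace_transpose_mul_mul_mul (T - S) 1 A T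
  rw [Matrix.one_mul, transpose_one, Matrix.one_mul] at hcore_trace
  simp only [zero_smul, add_zero, inv_one, Matrix.one_mul, Matrix.mul_neg, trace_neg]
  rw [hfactor_trace, hcore_trace, transpose_sub, Matrix.sub_mul _ _ A, trace_sub]
  simp only [Matrix.mul_assoc]
  ring

theorem transpose_mul_sub_mul_eq_of_isLocalMin (U Us : Matrix m r ℝ) (D : Matrix r k ℝ)
    (T S : Matrix r J ℝ)
    (hmin : ∀ A : Matrix r r ℝ, IsLocalMin (fun t : ℝ => frob ((U * (1 + t • A) - Us) * D) ^ 2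
        + frob ((1 + t • A)⁻¹ * T - S) ^ 2) 0) :
    Uᵀ * (U - Us) * (D * Dᵀ) = (T - S) * Tᵀ := by
  set G := Uᵀ * (U - Us) * (D * Dᵀ) - (T - S) * Tᵀ
  have hG : trace (Gᵀ * G) = 0 := by
    have := (hmin G).hasDerivAt_eq_zero (hasDerivAt_gauge_cost U Us D T S G)
    linarith
  rwa [← sub_eq_zero, ← trace_conjTranspose_mul_self_eq_zero_iff,
    conjTranspose_eq_transpose_of_trivial]

end FirstOrder

section Matricization

variable {n1 n2 n3 r1 r2 r3 : ℕ}

theorem M1_tucker (A : Matrix (Fin n1) (Fin r1) ℝ) (B : Matrix (Fin n2) (Fin r2) ℝ)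
    (C : Matrix (Fin n3) (Fin r3) ℝ) (S : Tensor r1 r2 r3) :
    M1 (tucker A B C S) = A * M1 S * (C ⊗ₖ B)ᵀ := by
  ext i p
  simp only [M1, tucker, of_apply, mul_apply, transpose_apply, kroneckerMap_apply,
    Fintype.sum_prod_type, Finset.sum_mul]
  rw [Finset.sum_comm_cycle]
  refine Finset.sum_congr rfl fun _ _ => ?_
  rw [Finset.sum_comm]
  refine Finset.sum_congr rfl fun _ _ => Finset.sum_congr rfl fun _ _ => by ring

theorem M2_tucker (A : Matrix (Fin n1) (Fin r1) ℝ) (B : Matrix (Fin n2) (Fin r2) ℝ)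
    (C : Matrix (Fin n3) (Fin r3) ℝ) (S : Tensor r1 r2 r3) :
    M2 (tucker A B C S) = B * M2 S * (C ⊗ₖ A)ᵀ := by
  ext i p
  simp only [M2, tucker, of_apply, mul_apply, transpose_apply, kroneckerMap_apply,
    Fintype.sum_prod_type, Finset.sum_mul]
  rw [Finset.sum_comm_cycle]
  refine Finset.sum_congr rfl fun _ _ => Finset.sum_congr rfl fun _ _ =>
    Finset.sum_congr rfl fun _ _ => by ring

theorem M3_tucker (A : Matrix (Fin n1) (Fin r1) ℝ) (B : Matrix (Fin n2) (Fin r2) ℝ)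
    (C : Matrix (Fin n3) (Fin r3) ℝ) (S : Tensor r1 r2 r3) :
    M3 (tucker A B C S) = C * M3 S * (B ⊗ₖ A)ᵀ := by
  ext i p
  simp only [M3, tucker, of_apply, mul_apply, transpose_apply, kroneckerMap_apply,
    Fintype.sum_prod_type, Finset.sum_mul]
  rw [Finset.sum_comm]
  refine Finset.sum_congr rfl fun _ _ => Finset.sum_congr rfl fun _ _ =>
    Finset.sum_congr rfl fun _ _ => by ring

theorem frobT_eq_frob_M1 (X : Tensor n1 n2 n3) : frobT X = frob (M1 X) := by
  simp only [frobT, frob, M1, of_apply, Fintype.sum_prod_type]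
  exact congrArg _ (Finset.sum_congr rfl fun _ _ => Finset.sum_comm)

theorem frobT_eq_frob_M2 (X : Tensor n1 n2 n3) : frobT X = frob (M2 X) := by
  simp only [frobT, frob, M2, of_apply, Fintype.sum_prod_type]
  rw [Finset.sum_comm]
  exact congrArg _ (Finset.sum_congr rfl fun _ _ => Finset.sum_comm)

theorem frobT_eq_frob_M3 (X : Tensor n1 n2 n3) : frobT X = frob (M3 X) := by
  simp only [frobT, frob, M3, of_apply, Fintype.sum_prod_type]
  rw [Finset.sum_comm_cycle]
  exact congrArg _ (Finset.sum_congr rfl fun _ _ => Finset.sum_comm)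

theorem M1_sub (X Y : Tensor n1 n2 n3) : M1 (X - Y) = M1 X - M1 Y := rfl

theorem M2_sub (X Y : Tensor n1 n2 n3) : M2 (X - Y) = M2 X - M2 Y := rfl

theorem M3_sub (X Y : Tensor n1 n2 n3) : M3 (X - Y) = M3 X - M3 Y := rfl

end Matricization

section Alignment

variable {n1 n2 n3 r1 r2 r3 : ℕ} (σ1 : Fin r1 → ℝ) (σ2 : Fin r2 → ℝ) (σ3 : Fin r3 → ℝ)
  (F Fs : Quad n1 n2 n3 r1 r2 r3)

noncomputable def alignCost (Q1 : Matrix (Fin r1) (Fin r1) ℝ) (Q2 : Matrix (Fin r2) (Fin r2) ℝ)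
    (Q3 : Matrix (Fin r3) (Fin r3) ℝ) : ℝ :=
  frob ((F.U * Q1 - Fs.U) * diagonal σ1) ^ 2 + frob ((F.V * Q2 - Fs.V) * diagonal σ2) ^ 2
    + frob ((F.W * Q3 - Fs.W) * diagonal σ3) ^ 2 + frobT (tucker Q1⁻¹ Q2⁻¹ Q3⁻¹ F.S - Fs.S) ^ 2

variable {σ1 σ2 σ3 F Fs} {Q1 : Matrix (Fin r1) (Fin r1) ℝ} {Q2 : Matrix (Fin r2) (Fin r2) ℝ}
  {Q3 : Matrix (Fin r3) (Fin r3) ℝ}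

theorem alignCost_le_of_eq_distSq (hopt : alignCost σ1 σ2 σ3 F Fs Q1 Q2 Q3 = distSq σ1 σ2 σ3 F Fs)
    {P1 : Matrix (Fin r1) (Fin r1) ℝ} {P2 : Matrix (Fin r2) (Fin r2) ℝ}
    {P3 : Matrix (Fin r3) (Fin r3) ℝ} (hP1 : IsUnit P1.det) (hP2 : IsUnit P2.det)
    (hP3 : IsUnit P3.det) :
    alignCost σ1 σ2 σ3 F Fs Q1 Q2 Q3 ≤ alignCost σ1 σ2 σ3 F Fs P1 P2 P3 := by
  rw [hopt]
  refine csInf_le ⟨0, ?_⟩ ⟨P1, P2, P3, hP1, hP2, hP3, rfl⟩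
  rintro d ⟨P1, P2, P3, -, -, -, rfl⟩
  positivity

theorem alignCost_first_order_U (hQ1 : IsUnit Q1.det)
    (hmin : ∀ P : Matrix (Fin r1) (Fin r1) ℝ, IsUnit P.det →
      alignCost σ1 σ2 σ3 F Fs Q1 Q2 Q3 ≤ alignCost σ1 σ2 σ3 F Fs P Q2 Q3) :
    (F.U * Q1)ᵀ * (F.U * Q1 - Fs.U) * (diagonal σ1 * diagonal σ1)
      = M1 (tucker Q1⁻¹ Q2⁻¹ Q3⁻¹ F.S - Fs.S) * (M1 (tucker Q1⁻¹ Q2⁻¹ Q3⁻¹ F.S))ᵀ := by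
  have key := transpose_mul_sub_mul_eq_of_isLocalMin (F.U * Q1) Fs.U (diagonal σ1)
    (M1 (tucker Q1⁻¹ Q2⁻¹ Q3⁻¹ F.S)) (M1 Fs.S) fun A => by
      filter_upwards [eventually_isUnit_det_one_add_smul A] with t ht
      have h := hmin (Q1 * (1 + t • A)) (by rw [det_mul]; exact hQ1.mul ht)
      simp only [alignCost, frobT_eq_frob_M1, M1_sub, Matrix.mul_inv_rev, M1_tucker,
        Matrix.mul_assoc, zero_smul, add_zero, Matrix.mul_one, inv_one, Matrix.one_mul] at h ⊢
      linarith
  rwa [diagonal_transpose, ← M1_sub] at key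

theorem alignCost_first_order_V (hQ2 : IsUnit Q2.det)
    (hmin : ∀ P : Matrix (Fin r2) (Fin r2) ℝ, IsUnit P.det →
      alignCost σ1 σ2 σ3 F Fs Q1 Q2 Q3 ≤ alignCost σ1 σ2 σ3 F Fs Q1 P Q3) :
    (F.V * Q2)ᵀ * (F.V * Q2 - Fs.V) * (diagonal σ2 * diagonal σ2)
      = M2 (tucker Q1⁻¹ Q2⁻¹ Q3⁻¹ F.S - Fs.S) * (M2 (tucker Q1⁻¹ Q2⁻¹ Q3⁻¹ F.S))ᵀ := by
  have key := transpose_mul_sub_mul_eq_of_isLocalMin (F.V * Q2) Fs.V (diagonal σ2)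
    (M2 (tucker Q1⁻¹ Q2⁻¹ Q3⁻¹ F.S)) (M2 Fs.S) fun A => by
      filter_upwards [eventually_isUnit_det_one_add_smul A] with t ht
      have h := hmin (Q2 * (1 + t • A)) (by rw [det_mul]; exact hQ2.mul ht)
      simp only [alignCost, frobT_eq_frob_M2, M2_sub, Matrix.mul_inv_rev, M2_tucker,
        Matrix.mul_assoc, zero_smul, add_zero, Matrix.mul_one, inv_one, Matrix.one_mul] at h ⊢
      linarith
  rwa [diagonal_transpose, ← M2_sub] at key

theorem alignCost_first_order_W (hQ3 : IsUnit Q3.det)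
    (hmin : ∀ P : Matrix (Fin r3) (Fin r3) ℝ, IsUnit P.det →
      alignCost σ1 σ2 σ3 F Fs Q1 Q2 Q3 ≤ alignCost σ1 σ2 σ3 F Fs Q1 Q2 P) :
    (F.W * Q3)ᵀ * (F.W * Q3 - Fs.W) * (diagonal σ3 * diagonal σ3)
      = M3 (tucker Q1⁻¹ Q2⁻¹ Q3⁻¹ F.S - Fs.S) * (M3 (tucker Q1⁻¹ Q2⁻¹ Q3⁻¹ F.S))ᵀ := by
  have key := transpose_mul_sub_mul_eq_of_isLocalMin (F.W * Q3) Fs.W (diagonal σ3)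
    (M3 (tucker Q1⁻¹ Q2⁻¹ Q3⁻¹ F.S)) (M3 Fs.S) fun A => by
      filter_upwards [eventually_isUnit_det_one_add_smul A] with t ht
      have h := hmin (Q3 * (1 + t • A)) (by rw [det_mul]; exact hQ3.mul ht)
      simp only [alignCost, frobT_eq_frob_M3, M3_sub, Matrix.mul_inv_rev, M3_tucker,
        Matrix.mul_assoc, zero_smul, add_zero, Matrix.mul_one, inv_one, Matrix.one_mul] at h ⊢
      linarith
  rwa [diagonal_transpose, ← M3_sub] at key

end Alignment

theorem optimal_alignment_criteria_general
    (n1 n2 n3 r1 r2 r3 : ℕ)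
    (σ1 : Fin r1 → ℝ) (σ2 : Fin r2 → ℝ) (σ3 : Fin r3 → ℝ)
    (Fs : Quad n1 n2 n3 r1 r2 r3)
    (F : Quad n1 n2 n3 r1 r2 r3)
    (Q1 : Matrix (Fin r1) (Fin r1) ℝ) (Q2 : Matrix (Fin r2) (Fin r2) ℝ)
    (Q3 : Matrix (Fin r3) (Fin r3) ℝ)
    (hQ1 : IsUnit Q1.det) (hQ2 : IsUnit Q2.det) (hQ3 : IsUnit Q3.det)
    (hopt : (frob ((F.U * Q1 - Fs.U) * Matrix.diagonal σ1)) ^ 2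
        + (frob ((F.V * Q2 - Fs.V) * Matrix.diagonal σ2)) ^ 2
        + (frob ((F.W * Q3 - Fs.W) * Matrix.diagonal σ3)) ^ 2
        + (frobT (tucker Q1⁻¹ Q2⁻¹ Q3⁻¹ F.S - Fs.S)) ^ 2
      = distSq σ1 σ2 σ3 F Fs) :
    (F.U * Q1)ᵀ * (F.U * Q1 - Fs.U) * (Matrix.diagonal σ1 * Matrix.diagonal σ1)
        = M1 (tucker Q1⁻¹ Q2⁻¹ Q3⁻¹ F.S - Fs.S) * (M1 (tucker Q1⁻¹ Q2⁻¹ Q3⁻¹ F.S))ᵀ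
    ∧ (F.V * Q2)ᵀ * (F.V * Q2 - Fs.V) * (Matrix.diagonal σ2 * Matrix.diagonal σ2)
        = M2 (tucker Q1⁻¹ Q2⁻¹ Q3⁻¹ F.S - Fs.S) * (M2 (tucker Q1⁻¹ Q2⁻¹ Q3⁻¹ F.S))ᵀ
    ∧ (F.W * Q3)ᵀ * (F.W * Q3 - Fs.W) * (Matrix.diagonal σ3 * Matrix.diagonal σ3)
        = M3 (tucker Q1⁻¹ Q2⁻¹ Q3⁻¹ F.S - Fs.S) * (M3 (tucker Q1⁻¹ Q2⁻¹ Q3⁻¹ F.S))ᵀ :=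
  ⟨alignCost_first_order_U hQ1 fun _ hP => alignCost_le_of_eq_distSq hopt hP hQ2 hQ3,
    alignCost_first_order_V hQ2 fun _ hP => alignCost_le_of_eq_distSq hopt hQ1 hP hQ3,
    alignCost_first_order_W hQ3 fun _ hP => alignCost_le_of_eq_distSq hopt hQ1 hQ2 hP⟩

/-- first-order optimality conditions for the optimal alignment matrices
(Lemma 7). -/
theorem optimal_alignment_criteria
    (n1 n2 n3 r1 r2 r3 : ℕ) (hn1 : 0 < n1) (hn2 : 0 < n2) (hn3 : 0 < n3)
    (hr1 : 0 < r1) (hr2 : 0 < r2) (hr3 : 0 < r3)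
    (σ1 : Fin r1 → ℝ) (σ2 : Fin r2 → ℝ) (σ3 : Fin r3 → ℝ)
    (Fs : Quad n1 n2 n3 r1 r2 r3) (hGT : GroundTruth σ1 σ2 σ3 Fs)
    (F : Quad n1 n2 n3 r1 r2 r3)
    (Q1 : Matrix (Fin r1) (Fin r1) ℝ) (Q2 : Matrix (Fin r2) (Fin r2) ℝ)
    (Q3 : Matrix (Fin r3) (Fin r3) ℝ)
    (hQ1 : IsUnit Q1.det) (hQ2 : IsUnit Q2.det) (hQ3 : IsUnit Q3.det)
    (hopt : (frob ((F.U * Q1 - Fs.U) * Matrix.diagonal σ1)) ^ 2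
        + (frob ((F.V * Q2 - Fs.V) * Matrix.diagonal σ2)) ^ 2
        + (frob ((F.W * Q3 - Fs.W) * Matrix.diagonal σ3)) ^ 2
        + (frobT (tucker Q1⁻¹ Q2⁻¹ Q3⁻¹ F.S - Fs.S)) ^ 2
      = distSq σ1 σ2 σ3 F Fs) :
    (F.U * Q1)ᵀ * (F.U * Q1 - Fs.U) * (Matrix.diagonal σ1 * Matrix.diagonal σ1)
        = M1 (tucker Q1⁻¹ Q2⁻¹ Q3⁻¹ F.S - Fs.S) * (M1 (tucker Q1⁻¹ Q2⁻¹ Q3⁻¹ F.S))ᵀ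
    ∧ (F.V * Q2)ᵀ * (F.V * Q2 - Fs.V) * (Matrix.diagonal σ2 * Matrix.diagonal σ2)
        = M2 (tucker Q1⁻¹ Q2⁻¹ Q3⁻¹ F.S - Fs.S) * (M2 (tucker Q1⁻¹ Q2⁻¹ Q3⁻¹ F.S))ᵀ
    ∧ (F.W * Q3)ᵀ * (F.W * Q3 - Fs.W) * (Matrix.diagonal σ3 * Matrix.diagonal σ3)
        = M3 (tucker Q1⁻¹ Q2⁻¹ Q3⁻¹ F.S - Fs.S) * (M3 (tucker Q1⁻¹ Q2⁻¹ Q3⁻¹ F.S))ᵀ :=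
  optimal_alignment_criteria_general n1 n2 n3 r1 r2 r3 σ1 σ2 σ3 Fs F Q1 Q2 Q3 hQ1 hQ2 hQ3 hopt

end ScaledGD
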